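/- arXiv:2307.11439 — 4 statements merged into one kernel-verified Lean document; each statement's English description precedes it below -/
import Mathlib

section
/- Let M_N be a random tensor satisfying Hypothesis (TensorModel) with parameter (c,c'). Then for all σ, σ' ∈ S_{2k}, the quantity Φ_N(M_{N,σ}·M_{N,σ'}^*) converges as N → ∞ to c if σ = σ', and to 0 otherwise. -/
open Filter Matrix

noncomputable section

/-- Glue two `k`-tuples of indices into a `2k`-tuple: positions `0,…,k-1` come from the
row index `i`, positions `k,…,2k-1` come from the column index `j`. -/
def glueIdx (k N : ℕ) (i j : Fin k → Fin N) : Fin (2 * k) → Fin N :=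
  fun s => if h : (s : ℕ) < k then i ⟨s, h⟩ else j ⟨(s : ℕ) - k, by have := s.isLt; omega⟩

/-- The flattening `M_{N,σ}` of a tensor `M ∈ (ℂ^N)^{⊗2k}`: the entry at row `i`
and column `j` is `M(x_{σ⁻¹(1)}, …, x_{σ⁻¹(2k)})` where `(x_1,…,x_{2k}) = (i, j)`. -/
def flatten (k N : ℕ) (M : (Fin (2 * k) → Fin N) → ℂ) (σ : Equiv.Perm (Fin (2 * k))) :
    Matrix (Fin k → Fin N) (Fin k → Fin N) ℂ :=
  fun i j => M fun s => glueIdx k N i j (σ.symm s)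

/-- The matrix `U_{N,η}` permuting the tensor factors of `(ℂ^N)^{⊗k}`:
`U_{N,η}(i,j) = ∏_s δ_{i_s, j_{η(s)}}`. -/
def Umat (k N : ℕ) (η : Equiv.Perm (Fin k)) :
    Matrix (Fin k → Fin N) (Fin k → Fin N) ℂ :=
  fun i j => if ∀ s, i s = j (η s) then 1 else 0

/-- `Φ_N(A) = E[N^{-k} · Tr A]` for a random `N^k × N^k` matrix `A`. -/
def Phi (k N : ℕ) {Ω : Type*} [MeasurableSpace Ω] (μ : MeasureTheory.Measure Ω)
    (A : Ω → Matrix (Fin k → Fin N) (Fin k → Fin N) ℂ) : ℂ :=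
  ∫ ω, ((N : ℂ) ^ k)⁻¹ * (A ω).trace ∂μ

/-- `Fin k ⊕ Fin k ≃ Fin (2k)`: the first summand goes to `0,…,k-1`, the second to
`k,…,2k-1`. -/
def finSumEquiv (k : ℕ) : (Fin k ⊕ Fin k) ≃ Fin (2 * k) :=
  finSumFinEquiv.trans (finCongr (by omega))

/-- The permutation `η ⊔ η'` of `{1,…,2k}` acting as `η` on the first `k` elements and as
`η'` on the last `k` elements. -/
def gluePerm (k : ℕ) (η η' : Equiv.Perm (Fin k)) : Equiv.Perm (Fin (2 * k)) :=
  (finSumEquiv k).permCongr (Equiv.sumCongr η η')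

/-- The involution `τ ∈ S_{2k}` swapping the first and the last `k` elements. -/
def tauPerm (k : ℕ) : Equiv.Perm (Fin (2 * k)) :=
  (finSumEquiv k).permCongr (Equiv.sumComm (Fin k) (Fin k))

/-- Hypothesis (TensorModel) with parameter `(c, c')`: for each `N`, a random tensor in
`(ℂ^N)^{⊗2k}` whose entries are i.i.d. copies of a centered complex random variable `m_N`
(of law `ν N`) having finite moments of all orders, with `N^k·E[|m_N|²] → c > 0`,
`N^k·E[m_N²] → c'`, and `N^k·E[m_N^{ℓ₁}·conj(m_N)^{ℓ₂}] → 0` whenever `ℓ₁ + ℓ₂ > 2`. -/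
structure TensorModel (k : ℕ) (c : ℝ) (c' : ℂ) where
  Ω : ℕ → Type
  [mΩ : ∀ N, MeasurableSpace (Ω N)]
  μ : ∀ N, MeasureTheory.Measure (Ω N)
  [prob : ∀ N, MeasureTheory.IsProbabilityMeasure (μ N)]
  X : ∀ N, (Fin (2 * k) → Fin N) → Ω N → ℂ
  meas : ∀ N i, Measurable (X N i)
  ν : ℕ → MeasureTheory.Measure ℂ
  law : ∀ N i, (μ N).map (X N i) = ν N
  indep : ∀ N, ProbabilityTheory.iIndepFun (X N) (μ N)
  centered : ∀ N, (∫ z : ℂ, z ∂(ν N)) = 0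
  finiteMoments : ∀ N (ℓ : ℕ), MeasureTheory.Integrable (fun z : ℂ => ‖z‖ ^ ℓ) (ν N)
  c_pos : 0 < c
  lim_abs_sq : Tendsto (fun N : ℕ => (N : ℝ) ^ k * ∫ z : ℂ, ‖z‖ ^ 2 ∂(ν N)) atTop (nhds c)
  lim_sq : Tendsto (fun N : ℕ => (N : ℂ) ^ k * ∫ z : ℂ, z ^ 2 ∂(ν N)) atTop (nhds c')
  lim_higher : ∀ ℓ₁ ℓ₂ : ℕ, 2 < ℓ₁ + ℓ₂ →
    Tendsto (fun N : ℕ => (N : ℂ) ^ k * ∫ z : ℂ, z ^ ℓ₁ * (starRingEnd ℂ z) ^ ℓ₂ ∂(ν N))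
      atTop (nhds 0)

instance {k : ℕ} {c : ℝ} {c' : ℂ} (M : TensorModel k c c') (N : ℕ) :
    MeasurableSpace (M.Ω N) := M.mΩ N

instance {k : ℕ} {c : ℝ} {c' : ℂ} (M : TensorModel k c c') (N : ℕ) :
    MeasureTheory.IsProbabilityMeasure (M.μ N) := M.prob N

/-- The flattening `M_{N,σ}` of the random tensor, as a random matrix. -/
def TensorModel.flat {k : ℕ} {c : ℝ} {c' : ℂ} (M : TensorModel k c c') (N : ℕ)
    (σ : Equiv.Perm (Fin (2 * k))) (ω : M.Ω N) :
    Matrix (Fin k → Fin N) (Fin k → Fin N) ℂ :=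
  flatten k N (fun idx => M.X N idx ω) σ

/-!
Expanding the trace, `Φ_N(M_{N,σ} M_{N,σ'}^*)` is `N^{-k}` times the sum over `x ∈ [N]^{2k}` of
`E[m(x ∘ σ⁻¹) · conj m(x ∘ σ'⁻¹)]`. By independence and centering such a term is `E|m_N|²` when
`x ∘ σ⁻¹ = x ∘ σ'⁻¹` and `0` otherwise, so `Φ_N` is the proportion of such coincidences `x` times
`N^k E|m_N|² → c`. For `σ = σ'` every `x` is a coincidence; for `σ ≠ σ'` a coincidence has two
prescribed coordinates equal, so there are at most `N^{2k-1}` of them and the proportion is at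
most `1/N`.
-/

section Coincidences

open Finset

theorem card_filter_apply_eq_apply_le {α β : Type*} [Fintype α] [DecidableEq α] [Fintype β]
    [DecidableEq β] {a b : α} (hab : a ≠ b) :
    #{x : α → β | x a = x b} ≤ Fintype.card β ^ (Fintype.card α - 1) := by
  calc #{x : α → β | x a = x b}
      ≤ #(univ : Finset ({s // s ≠ a} → β)) := by
        refine card_le_card_of_injOn (fun x s => x s) (fun _ _ => mem_univ _) ?_
        intro x hx y hy hxy
        simp only [coe_filter, mem_univ, true_and, Set.mem_ofPred_eq] at hx hy
        funext s
        by_cases hs : s = a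
        · subst hs
          rw [hx, hy]
          exact congrFun hxy ⟨b, hab.symm⟩
        · exact congrFun hxy ⟨s, hs⟩
    _ = Fintype.card β ^ (Fintype.card α - 1) := by
        simp [Fintype.card_subtype_compl]

theorem tendsto_card_filter_comp_eq_comp_div_pow {α : Type*} [Fintype α] [DecidableEq α]
    (π π' : Equiv.Perm α) :
    Tendsto (fun N : ℕ => (#{x : α → Fin N | x ∘ π = x ∘ π'} : ℝ) / N ^ Fintype.card α)
      atTop (nhds (if π = π' then 1 else 0)) := by
  split_ifs with h
  · subst h
    refine tendsto_const_nhds.congr' ?_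
    filter_upwards [eventually_ge_atTop 1] with N hN
    have hN0 : (N : ℝ) ≠ 0 := by positivity
    simp [hN0]
  · obtain ⟨s, hs⟩ : ∃ s, π s ≠ π' s := by
      by_contra! h'
      exact h (Equiv.ext h')
    have hcard : 1 ≤ Fintype.card α := Fintype.card_pos_iff.mpr ⟨s⟩
    refine squeeze_zero' (Eventually.of_forall fun N => by positivity) ?_
      tendsto_inv_atTop_nhds_zero_nat
    filter_upwards [eventually_ge_atTop 1] with N hN
    have hsub : #{x : α → Fin N | x ∘ π = x ∘ π'} ≤ #{x : α → Fin N | x (π s) = x (π' s)} :=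
      card_le_card (monotone_filter_right _ fun x _ hx => congrFun hx s)
    have hle := hsub.trans (card_filter_apply_eq_apply_le (β := Fin N) hs)
    rw [Fintype.card_fin] at hle
    have hN0 : (0 : ℝ) < N := by exact_mod_cast hN
    rw [div_le_iff₀ (by positivity), ← pow_sub_one_mul (by omega), mul_comm,
      mul_inv_cancel_right₀ hN0.ne']
    exact_mod_cast hle

end Coincidences

theorem glueIdx_eq_append (k N : ℕ) (i j : Fin k → Fin N) :
    glueIdx k N i j = Fin.append i j ∘ Fin.cast (two_mul k) := by
  funext s
  by_cases h : (s : ℕ) < k <;> simp [glueIdx, h, Fin.append, Fin.addCases] <;> rfl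

theorem glueIdx_bijective (k N : ℕ) :
    Function.Bijective fun p : (Fin k → Fin N) × (Fin k → Fin N) => glueIdx k N p.1 p.2 := by
  simp only [glueIdx_eq_append]
  exact ((Fin.appendEquiv k k).trans
    (Equiv.arrowCongr (finCongr (two_mul k).symm) (Equiv.refl _))).bijective

theorem trace_flatten_mul_conjTranspose (k N : ℕ) (A : (Fin (2 * k) → Fin N) → ℂ)
    (σ σ' : Equiv.Perm (Fin (2 * k))) :
    (flatten k N A σ * (flatten k N A σ')ᴴ).trace
      = ∑ x : Fin (2 * k) → Fin N, A (x ∘ σ.symm) * starRingEnd ℂ (A (x ∘ σ'.symm)) := by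
  rw [← (glueIdx_bijective k N).sum_comp, Matrix.trace, Fintype.sum_prod_type]
  simp only [Matrix.diag_apply, Matrix.mul_apply, Matrix.conjTranspose_apply, flatten,
    starRingEnd_apply, Function.comp_def]

namespace ProbabilityTheory

open MeasureTheory

variable {Ω ι : Type*} [MeasurableSpace Ω] {μ : Measure Ω} {X : ι → Ω → ℂ} {ν : Measure ℂ}

theorem integrable_mul_conj_of_map_eq (hX : ∀ i, Measurable (X i)) (hlaw : ∀ i, μ.map (X i) = ν)
    (hν : Integrable (fun z : ℂ => ‖z‖ ^ 2) ν) (i j : ι) :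
    Integrable (fun ω => X i ω * starRingEnd ℂ (X j ω)) μ := by
  have hL2 : ∀ i, MemLp (X i) 2 μ := fun i => by
    rw [memLp_two_iff_integrable_sq_norm (hX i).aestronglyMeasurable]
    rw [← hlaw i] at hν
    exact (integrable_map_measure (by fun_prop) (hX i).aemeasurable).mp hν
  exact (hL2 i).integrable_mul (hL2 j).star

theorem integral_mul_conj_of_iIndepFun [DecidableEq ι] (hX : ∀ i, Measurable (X i))
    (hlaw : ∀ i, μ.map (X i) = ν) (hind : iIndepFun X μ) (hcent : ∫ z, z ∂ν = 0) (i j : ι) :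
    ∫ ω, X i ω * starRingEnd ℂ (X j ω) ∂μ
      = if i = j then ((∫ z, ‖z‖ ^ 2 ∂ν : ℝ) : ℂ) else 0 := by
  split_ifs with hij
  · subst hij
    simp_rw [Complex.mul_conj', ← Complex.ofReal_pow]
    rw [integral_complex_ofReal, ← hlaw i, integral_map (hX i).aemeasurable (by fun_prop)]
  · have hmean : ∫ ω, X i ω ∂μ = 0 := by
      rw [← hcent, ← hlaw i]
      exact (integral_map (hX i).aemeasurable aestronglyMeasurable_id).symm
    have hsplit := (hind.indepFun hij).integral_fun_comp_mul_comp (f := id)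
      (g := starRingEnd ℂ) (hX i).aemeasurable (hX j).aemeasurable aestronglyMeasurable_id
      (by fun_prop)
    simp only [id] at hsplit
    rw [hsplit, hmean, zero_mul]

end ProbabilityTheory

open MeasureTheory ProbabilityTheory Finset in
theorem TensorModel.phi_flat_mul_conjTranspose_flat {k : ℕ} {c : ℝ} {c' : ℂ}
    (M : TensorModel k c c') (σ σ' : Equiv.Perm (Fin (2 * k))) (N : ℕ) :
    Phi k N (M.μ N) (fun ω => M.flat N σ ω * (M.flat N σ' ω)ᴴ)
      = (((#{x : Fin (2 * k) → Fin N | x ∘ σ.symm = x ∘ σ'.symm} : ℝ) / N ^ (2 * k)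
          * (N ^ k * ∫ z, ‖z‖ ^ 2 ∂M.ν N) : ℝ) : ℂ) := by
  simp only [Phi, TensorModel.flat, trace_flatten_mul_conjTranspose]
  rw [integral_const_mul, integral_finsetSum _ fun x _ =>
    integrable_mul_conj_of_map_eq (M.meas N) (M.law N) (M.finiteMoments N 2) _ _]
  simp_rw [integral_mul_conj_of_iIndepFun (M.meas N) (M.law N) (M.indep N) (M.centered N)]
  rw [sum_ite, sum_const, sum_const_zero, add_zero, nsmul_eq_mul, pow_mul']
  push_cast
  rcases eq_or_ne ((N : ℂ) ^ k) 0 with h | h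
  · simp [h]
  · field_simp

theorem flattenings_star_covariance_general
    (k : ℕ) (c : ℝ) (c' : ℂ) (M : TensorModel k c c')
    (σ σ' : Equiv.Perm (Fin (2 * k))) :
    Tendsto (fun N : ℕ =>
        Phi k N (M.μ N) (fun ω => M.flat N σ ω * (M.flat N σ' ω)ᴴ))
      atTop (nhds (if σ = σ' then (c : ℂ) else 0)) := by
  have hratio := tendsto_card_filter_comp_eq_comp_div_pow σ.symm σ'.symm
  simp only [Fintype.card_fin, Equiv.symm_bijective.injective.eq_iff] at hratio
  have hlim := (Complex.continuous_ofReal.tendsto _).comp (hratio.mul M.lim_abs_sq)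
  convert hlim using 1
  · exact funext (M.phi_flat_mul_conjTranspose_flat σ σ')
  · split_ifs <;> simp

/-- For a random tensor satisfying Hypothesis (TensorModel) with parameter
`(c, c')`, for all `σ, σ' ∈ S_{2k}` the quantity `Φ_N(M_{N,σ} · M_{N,σ'}^*)` converges, as
`N → ∞`, to `c` if `σ = σ'` and to `0` otherwise. -/
theorem flattenings_star_covariance
    (k : ℕ) (hk : 1 ≤ k) (c : ℝ) (c' : ℂ) (M : TensorModel k c c')
    (σ σ' : Equiv.Perm (Fin (2 * k))) :
    Tendsto (fun N : ℕ =>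
        Phi k N (M.μ N) (fun ω => M.flat N σ ω * (M.flat N σ' ω)ᴴ))
      atTop (nhds (if σ = σ' then (c : ℂ) else 0)) :=
  flattenings_star_covariance_general k c c' M σ σ'
end
end

section
/- For every integer k ≥ 1, every N ≥ 1, every pair η₁, η₂ ∈ S_k, and every N^k × N^k complex matrix A, one has 𝓔_N(U_{N,η₁}·A·U_{N,η₂}) = U_{N,η₁}·𝓔_N(A)·U_{N,η₂}. Consequently, by linearity, 𝓔_N(B·A·B') = B·𝓔_N(A)·B' for all B, B' in the linear span of the matrices U_{N,η}, η ∈ S_k. -/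
/- Since `η ↦ U_η` is an anti-homomorphism with `U_η^* = U_{η⁻¹}`, cyclicity of the trace gives
`Tr(U_{η₁} A U_{η₂} U_{η₂τη₁}^*) = Tr(A U_τ^*)`, so reindexing the sum over `S_k` by
`τ ↦ η₂τη₁` proves the identity for the generators. Both sides of `𝓔_N(B A B') = B 𝓔_N(A) B'`
are linear in `B` and in `B'`, hence it extends to their span. -/

open Matrix

noncomputable section

/-- The conditional expectation `𝓔_N(A) = Σ_{η ∈ S_k} N^{-k}·Tr(A·U_{N,η}^*)·U_{N,η}`. -/
def Emap (k N : ℕ) (A : Matrix (Fin k → Fin N) (Fin k → Fin N) ℂ) :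
    Matrix (Fin k → Fin N) (Fin k → Fin N) ℂ :=
  ∑ η : Equiv.Perm (Fin k), (((N : ℂ) ^ k)⁻¹ * (A * (Umat k N η)ᴴ).trace) • Umat k N η

theorem LinearMap.map_mul_mul_of_mem_span {R M : Type*} [CommSemiring R] [Semiring M]
    [Algebra R M] (f : M →ₗ[R] M) {S : Set M}
    (hS : ∀ s ∈ S, ∀ t ∈ S, ∀ a, f (s * a * t) = s * f a * t)
    {b b' : M} (hb : b ∈ Submodule.span R S) (hb' : b' ∈ Submodule.span R S) (a : M) :
    f (b * a * b') = b * f a * b' := by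
  have right : ∀ s ∈ S, ∀ a, f (s * a * b') = s * f a * b' := fun s hs a =>
    LinearMap.eqOn_span (f := f ∘ₗ LinearMap.mulLeft R (s * a))
      (g := LinearMap.mulLeft R (s * f a)) (fun t ht => hS s hs t ht a) hb'
  have left : f (b * (a * b')) = b * (f a * b') :=
    LinearMap.eqOn_span (f := f ∘ₗ LinearMap.mulRight R (a * b'))
      (g := LinearMap.mulRight R (f a * b'))
      (fun s hs => by simpa [mul_assoc] using right s hs a) hb
  simpa only [mul_assoc] using left

section

variable {k N : ℕ}

theorem Umat_mul (α β : Equiv.Perm (Fin k)) :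
    Umat k N α * Umat k N β = Umat k N (β * α) := by
  ext i j
  simp only [Matrix.mul_apply, Umat]
  rw [Finset.sum_eq_single (fun s => j (β s))]
  · simp only [implies_true, ↓reduceIte, mul_one, Equiv.Perm.mul_apply]
    exact if_congr Iff.rfl rfl rfl
  · intro l _ hl
    have : ¬ ∀ s, l s = j (β s) := fun h => hl (funext h)
    simp [this]
  · simp

theorem Umat_conjTranspose (η : Equiv.Perm (Fin k)) :
    (Umat k N η)ᴴ = Umat k N η⁻¹ := by
  ext i j
  have hiff : (∀ s, j s = i (η s)) ↔ (∀ s, i s = j (η⁻¹ s)) :=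
    ⟨fun h s => by rw [h]; simp, fun h s => by rw [h]; simp⟩
  simp only [Umat, conjTranspose_apply, apply_ite (star : ℂ → ℂ), star_one, star_zero]
  exact if_congr hiff rfl rfl

def Emap.linearMap (k N : ℕ) :
    Matrix (Fin k → Fin N) (Fin k → Fin N) ℂ →ₗ[ℂ] Matrix (Fin k → Fin N) (Fin k → Fin N) ℂ where
  toFun := Emap k N
  map_add' X Y := by
    simp [Emap, add_mul, Matrix.trace_add, mul_add, add_smul, Finset.sum_add_distrib]
  map_smul' c X := by
    simp only [Emap, smul_mul_assoc, Matrix.trace_smul, smul_eq_mul, Finset.smul_sum, smul_smul,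
      RingHom.id_apply, mul_left_comm]

theorem Emap_Umat_mul_mul_Umat (η₁ η₂ : Equiv.Perm (Fin k))
    (A : Matrix (Fin k → Fin N) (Fin k → Fin N) ℂ) :
    Emap k N (Umat k N η₁ * A * Umat k N η₂) = Umat k N η₁ * Emap k N A * Umat k N η₂ := by
  have trace_conj : ∀ τ, (Umat k N η₁ * A * Umat k N η₂ * (Umat k N (η₂ * τ * η₁))ᴴ).trace =
      (A * (Umat k N τ)ᴴ).trace := fun τ => by
    rw [Matrix.mul_assoc, Matrix.mul_assoc, trace_mul_comm]
    simp only [Matrix.mul_assoc, Umat_conjTranspose, Umat_mul]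
    group
  unfold Emap
  rw [Matrix.mul_sum, Finset.sum_mul]
  refine (Fintype.sum_equiv ((Equiv.mulLeft η₂).trans (Equiv.mulRight η₁)) _ _ fun τ => ?_).symm
  simp only [Equiv.trans_apply, Equiv.coe_mulLeft, Equiv.coe_mulRight]
  rw [trace_conj, mul_smul_comm, smul_mul_assoc, Umat_mul, Umat_mul, mul_assoc]

end

theorem Emap_bimodule_general (k N : ℕ) :
    (∀ (η₁ η₂ : Equiv.Perm (Fin k)) (A : Matrix (Fin k → Fin N) (Fin k → Fin N) ℂ),
        Emap k N (Umat k N η₁ * A * Umat k N η₂) =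
          Umat k N η₁ * Emap k N A * Umat k N η₂) ∧
      (∀ B B' : Matrix (Fin k → Fin N) (Fin k → Fin N) ℂ,
        B ∈ Submodule.span ℂ (Set.range (Umat k N)) →
        B' ∈ Submodule.span ℂ (Set.range (Umat k N)) →
        ∀ A : Matrix (Fin k → Fin N) (Fin k → Fin N) ℂ,
          Emap k N (B * A * B') = B * Emap k N A * B') := by
  refine ⟨Emap_Umat_mul_mul_Umat, fun B B' hB hB' A => ?_⟩
  refine (Emap.linearMap k N).map_mul_mul_of_mem_span ?_ hB hB' A
  rintro _ ⟨η₁, rfl⟩ _ ⟨η₂, rfl⟩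
  exact Emap_Umat_mul_mul_Umat η₁ η₂

/-- For every `k ≥ 1`, `N ≥ 1`, all `η₁, η₂ ∈ S_k` and every `N^k × N^k`
matrix `A`, one has `𝓔_N(U_{N,η₁}·A·U_{N,η₂}) = U_{N,η₁}·𝓔_N(A)·U_{N,η₂}`; consequently,
by linearity, `𝓔_N(B·A·B') = B·𝓔_N(A)·B'` for all `B, B'` in the linear span of the
matrices `U_{N,η}`, `η ∈ S_k`. -/
theorem Emap_bimodule (k N : ℕ) (hk : 1 ≤ k) (hN : 1 ≤ N) :
    (∀ (η₁ η₂ : Equiv.Perm (Fin k)) (A : Matrix (Fin k → Fin N) (Fin k → Fin N) ℂ),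
        Emap k N (Umat k N η₁ * A * Umat k N η₂) =
          Umat k N η₁ * Emap k N A * Umat k N η₂) ∧
      (∀ B B' : Matrix (Fin k → Fin N) (Fin k → Fin N) ℂ,
        B ∈ Submodule.span ℂ (Set.range (Umat k N)) →
        B' ∈ Submodule.span ℂ (Set.range (Umat k N)) →
        ∀ A : Matrix (Fin k → Fin N) (Fin k → Fin N) ℂ,
          Emap k N (B * A * B') = B * Emap k N A * B') :=
  Emap_bimodule_general k N
end
end

section
/- Let k ≥ 1 and let M_N be a random tensor satisfying Hypothesis (TensorModel) with parameter (c,c'). Set S_{1,N} = ((2k)!·k!·c)^{-1/2} · Σ_{σ ∈ S_{2k}} M_{N,σ}. Then for all η, η' ∈ S_k, Φ_N(S_{1,N}·U_{N,η}·S_{1,N}^*·U_{N,η'}^*) converges to 1/k! as N → ∞ (in particular the limit does not depend on η or η'). -/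
open Filter Matrix

noncomputable section

/-- `S_{1,N} = ((2k)!·k!·c)^{-1/2} · Σ_{σ ∈ S_{2k}} M_{N,σ}`. -/
def S1 {k : ℕ} {c : ℝ} {c' : ℂ} (M : TensorModel k c c') (N : ℕ) (ω : M.Ω N) :
    Matrix (Fin k → Fin N) (Fin k → Fin N) ℂ :=
  (((Real.sqrt ((((2 * k).factorial * k.factorial : ℕ) : ℝ) * c))⁻¹ : ℝ) : ℂ) •
    ∑ σ : Equiv.Perm (Fin (2 * k)), M.flat N σ ω

/-!
Permuting tensor legs does not change the symmetrized tensor `T f = Σ_σ m(f ∘ σ⁻¹)`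
(`f : [2k] → [N]`), and `U_η`, `U_η'` act exactly by permuting legs; so whatever `η, η'`,
the trace is `Σ_f |T f|²`. The entries being centered and independent, `E|T f|²` is `E|m_N|²`
times the number of pairs `(σ, σ')` with `f ∘ σ⁻¹ = f ∘ σ'⁻¹`, i.e. `(2k)!` times the order of
the stabilizer of `f`. Counting by permutations instead, `Σ_f |Stab f| = Σ_π |Fix π|`, where
`|Fix 1| = N^{2k}` and `|Fix π| ≤ N^{2k-1}` otherwise. Hence
`Φ_N ~ (2k)! · N^k E|m_N|² / ((2k)! k! c) → 1/k!`.
-/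

open Finset

section PermFunctions

variable {ι α : Type*} [Fintype ι] [DecidableEq ι]

lemma card_comp_perm_eq_self_le [Fintype α] [DecidableEq α] {π : Equiv.Perm ι} (hπ : π ≠ 1) :
    #{f : ι → α | f ∘ π = f} ≤ Fintype.card α ^ (Fintype.card ι - 1) := by
  obtain ⟨u, hu⟩ : ∃ u, π u ≠ u := not_forall.mp fun h => hπ (Equiv.ext h)
  have hne : π.symm u ≠ u := fun h => hu (by rw [← h, Equiv.apply_symm_apply, h])
  -- an invariant function is determined by its values off `u`, since `f u = f (π⁻¹ u)`
  have hfix : ∀ f : ι → α, f ∘ π = f → f u = f (π.symm u) := fun f hf => by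
    simpa using congrFun hf (π.symm u)
  calc #{f : ι → α | f ∘ π = f} ≤ Fintype.card ({x : ι // x ≠ u} → α) := by
        refine card_le_card_of_injOn (fun f x => f x.1) (fun _ _ => mem_univ _) ?_
        intro f₁ h₁ f₂ h₂ h₁₂
        simp only [coe_filter, mem_univ, true_and, Set.mem_ofPred_eq] at h₁ h₂
        funext x
        by_cases hx : x = u
        · rw [hx, hfix f₁ h₁, hfix f₂ h₂]
          exact congrFun h₁₂ ⟨π.symm u, hne⟩
        · exact congrFun h₁₂ ⟨x, hx⟩
    _ = Fintype.card α ^ (Fintype.card ι - 1) := by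
        simp [Fintype.card_subtype_compl]

lemma tendsto_card_comp_perm_eq_self_div_pow (π : Equiv.Perm ι) :
    Tendsto (fun N : ℕ => (#{f : ι → Fin N | f ∘ π = f} : ℝ) / (N : ℝ) ^ Fintype.card ι)
      atTop (nhds (if π = 1 then 1 else 0)) := by
  split_ifs with hπ
  · subst hπ
    refine tendsto_const_nhds.congr' ?_
    filter_upwards [eventually_ge_atTop 1] with N hN
    simp [show (N : ℝ) ≠ 0 by positivity]
  · obtain ⟨u, -⟩ := not_forall.mp (mt Equiv.Perm.ext hπ)
    have hn : Fintype.card ι = Fintype.card ι - 1 + 1 :=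
      (Nat.succ_pred_eq_of_pos (Fintype.card_pos_iff.mpr ⟨u⟩)).symm
    refine squeeze_zero' (Eventually.of_forall fun N => by positivity) ?_
      tendsto_inv_atTop_nhds_zero_nat
    filter_upwards [eventually_ge_atTop 1] with N hN
    have hN : (0 : ℝ) < N := by exact_mod_cast hN
    rw [div_le_iff₀ (by positivity), hn, pow_succ, mul_comm, mul_assoc, mul_inv_cancel₀ hN.ne',
      mul_one]
    exact_mod_cast (Fintype.card_fin N ▸ card_comp_perm_eq_self_le hπ :)

lemma tendsto_sum_card_comp_perm_eq_self_div_pow :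
    Tendsto (fun N : ℕ => (∑ π : Equiv.Perm ι, #{f : ι → Fin N | f ∘ π = f} : ℝ) /
      (N : ℝ) ^ Fintype.card ι) atTop (nhds 1) := by
  simp only [sum_div]
  simpa using tendsto_finsetSum univ fun π _ => tendsto_card_comp_perm_eq_self_div_pow π

lemma card_comp_symm_eq_comp_symm [DecidableEq α] (f : ι → α) :
    #{p : Equiv.Perm ι × Equiv.Perm ι | f ∘ p.1.symm = f ∘ p.2.symm}
      = (Fintype.card ι).factorial * #{τ : Equiv.Perm ι | f ∘ τ = f} := by
  have key : ∀ σ τ : Equiv.Perm ι, f ∘ σ.symm = f ∘ (σ * τ).symm ↔ f ∘ τ = f := by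
    intro σ τ
    constructor
    · intro h
      funext x
      simpa [Equiv.Perm.mul_def] using congrFun h (σ (τ x))
    · intro h
      funext x
      simpa [Equiv.Perm.mul_def] using congrFun h (τ.symm (σ.symm x))
  rw [card_filter, Fintype.sum_prod_type, ← Fintype.card_perm, ← card_univ, ← smul_eq_mul,
    ← sum_const, card_filter]
  refine sum_congr rfl fun σ _ => ?_
  rw [← Equiv.sum_comp (Equiv.mulLeft σ)]
  simp only [Equiv.coe_mulLeft, key]

lemma sum_card_comp_perm_eq_self_comm [Fintype α] [DecidableEq α] :
    ∑ f : ι → α, #{τ : Equiv.Perm ι | f ∘ τ = f}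
      = ∑ τ : Equiv.Perm ι, #{f : ι → α | f ∘ τ = f} := by
  simp only [card_filter]
  exact sum_comm

end PermFunctions

lemma glueIdx_eq_comp (k N : ℕ) (i j : Fin k → Fin N) :
    glueIdx k N i j = Sum.elim i j ∘ (finSumEquiv k).symm := by
  funext s
  obtain ⟨x, rfl⟩ := (finSumEquiv k).surjective s
  rcases x with t | t <;>
    simp only [Function.comp_apply, Equiv.symm_apply_apply, Sum.elim_inl, Sum.elim_inr] <;>
    simp [glueIdx, finSumEquiv]

lemma glueIdx_comp_gluePerm (k N : ℕ) (η η' : Equiv.Perm (Fin k)) (i j : Fin k → Fin N) :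
    glueIdx k N (i ∘ η) (j ∘ η') = glueIdx k N i j ∘ gluePerm k η η' := by
  funext s
  obtain ⟨x, rfl⟩ := (finSumEquiv k).surjective s
  rcases x with t | t <;> simp [glueIdx_eq_comp, gluePerm, Equiv.permCongr_apply]

lemma sum_sum_glueIdx {R : Type*} [AddCommMonoid R] (k N : ℕ) (F : (Fin (2 * k) → Fin N) → R) :
    ∑ i, ∑ j, F (glueIdx k N i j) = ∑ f, F f := by
  rw [← Fintype.sum_prod_type']
  refine Fintype.sum_equiv (((Equiv.sumArrowEquivProdArrow _ _ _).symm).trans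
    ((finSumEquiv k).arrowCongr (Equiv.refl _))) _ _ fun ij => ?_
  rw [glueIdx_eq_comp]
  rfl

def symmetrize {ι α R : Type*} [Fintype ι] [DecidableEq ι] [AddCommMonoid R]
    (X : (ι → α) → R) (f : ι → α) : R :=
  ∑ σ : Equiv.Perm ι, X (f ∘ σ.symm)

lemma symmetrize_comp_perm {ι α R : Type*} [Fintype ι] [DecidableEq ι] [AddCommMonoid R]
    (X : (ι → α) → R) (f : ι → α) (π : Equiv.Perm ι) :
    symmetrize X (f ∘ π) = symmetrize X f := by
  rw [symmetrize, ← Equiv.sum_comp (Equiv.mulRight π)]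
  refine sum_congr rfl fun σ _ => congrArg X (funext fun x => ?_)
  simp [Equiv.Perm.mul_def]

lemma sum_flatten_apply (k N : ℕ) (X : (Fin (2 * k) → Fin N) → ℂ) (i j : Fin k → Fin N) :
    (∑ σ, flatten k N X σ) i j = symmetrize X (glueIdx k N i j) := by
  simp only [Matrix.sum_apply, flatten, symmetrize]
  rfl

lemma Umat_apply_eq_ite (k N : ℕ) (η : Equiv.Perm (Fin k)) (i j : Fin k → Fin N) :
    Umat k N η i j = if i = j ∘ η then 1 else 0 := by
  simp only [Umat, funext_iff, Function.comp_apply]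

lemma trace_mul_Umat_mul_conjTranspose_mul_conjTranspose_Umat (k N : ℕ)
    (η η' : Equiv.Perm (Fin k)) (A B : Matrix (Fin k → Fin N) (Fin k → Fin N) ℂ) :
    (A * Umat k N η * Bᴴ * (Umat k N η')ᴴ).trace
      = ∑ i, ∑ j, A (i ∘ η') (j ∘ η) * starRingEnd ℂ (B i j) := by
  rw [Matrix.trace_mul_comm]
  simp [Matrix.trace, Matrix.mul_apply, Umat_apply_eq_ite, mul_sum]

lemma trace_sum_flatten_mul_Umat (k N : ℕ) (η η' : Equiv.Perm (Fin k))
    (X : (Fin (2 * k) → Fin N) → ℂ) :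
    ((∑ σ, flatten k N X σ) * Umat k N η * (∑ σ, flatten k N X σ)ᴴ * (Umat k N η')ᴴ).trace
      = ∑ f, symmetrize X f * starRingEnd ℂ (symmetrize X f) := by
  simp only [trace_mul_Umat_mul_conjTranspose_mul_conjTranspose_Umat, sum_flatten_apply,
    glueIdx_comp_gluePerm, symmetrize_comp_perm]
  exact sum_sum_glueIdx k N fun f => symmetrize X f * starRingEnd ℂ (symmetrize X f)

open MeasureTheory ProbabilityTheory

lemma integral_sum_mul_conj_sum {Ω I ι : Type*} [MeasurableSpace Ω] {μ : Measure Ω} [Fintype ι]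
    [DecidableEq I] (X : I → Ω → ℂ) (r : ℂ) (hX : ∀ a, MemLp (X a) 2 μ)
    (hcov : ∀ a b, ∫ ω, X a ω * starRingEnd ℂ (X b ω) ∂μ = if a = b then r else 0)
    (φ : ι → I) :
    ∫ ω, (∑ i, X (φ i) ω) * starRingEnd ℂ (∑ j, X (φ j) ω) ∂μ
      = #{p : ι × ι | φ p.1 = φ p.2} * r := by
  have hint : ∀ a b, Integrable (fun ω => X a ω * starRingEnd ℂ (X b ω)) μ :=
    fun a b => (hX a).integrable_mul (hX b).star
  simp_rw [map_sum, sum_mul_sum]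
  rw [integral_finsetSum _ fun i _ => integrable_finsetSum _ fun j _ => hint _ _]
  simp_rw [integral_finsetSum _ fun j _ => hint _ _, hcov, card_filter, Fintype.sum_prod_type,
    Nat.cast_sum, sum_mul, Nat.cast_ite, ite_mul, Nat.cast_one, one_mul, Nat.cast_zero, zero_mul]

namespace TensorModel

variable {k : ℕ} {c : ℝ} {c' : ℂ} (M : TensorModel k c c') (N : ℕ)

lemma integral_comp_X {E : Type*} [NormedAddCommGroup E] [NormedSpace ℝ E] {g : ℂ → E}
    (hg : AEStronglyMeasurable g (M.ν N)) (a : Fin (2 * k) → Fin N) :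
    ∫ ω, g (M.X N a ω) ∂(M.μ N) = ∫ z, g z ∂(M.ν N) := by
  rw [← M.law N a] at hg ⊢
  exact (integral_map (M.meas N a).aemeasurable hg).symm

lemma memLp_X (a : Fin (2 * k) → Fin N) : MemLp (M.X N a) 2 (M.μ N) := by
  have h : MemLp id 2 (M.ν N) :=
    (memLp_two_iff_integrable_sq_norm aestronglyMeasurable_id).2 (M.finiteMoments N 2)
  rw [← M.law N a] at h
  exact (memLp_map_measure_iff aestronglyMeasurable_id (M.meas N a).aemeasurable).1 h

lemma integral_mul_conj (a b : Fin (2 * k) → Fin N) :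
    ∫ ω, M.X N a ω * starRingEnd ℂ (M.X N b ω) ∂(M.μ N)
      = if a = b then ((∫ z, ‖z‖ ^ 2 ∂(M.ν N) : ℝ) : ℂ) else 0 := by
  split_ifs with hab
  · subst hab
    simp_rw [Complex.mul_conj, Complex.normSq_eq_norm_sq, integral_complex_ofReal]
    exact congrArg _ (M.integral_comp_X N
      (by fun_prop : Continuous fun z : ℂ => ‖z‖ ^ 2).aestronglyMeasurable a)
  · have hcentered : ∫ ω, M.X N a ω ∂(M.μ N) = 0 :=
      (M.integral_comp_X N (g := id) aestronglyMeasurable_id a).trans (M.centered N)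
    have hind : IndepFun (M.X N a) (fun ω => starRingEnd ℂ (M.X N b ω)) (M.μ N) :=
      ((M.indep N).indepFun hab).comp measurable_id Complex.continuous_conj.measurable
    rw [hind.integral_fun_mul_eq_mul_integral (M.meas N a).aestronglyMeasurable
      (Complex.continuous_conj.comp_aestronglyMeasurable (M.meas N b).aestronglyMeasurable),
      hcentered, zero_mul]

lemma integral_symmetrize_mul_conj (f : Fin (2 * k) → Fin N) :
    ∫ ω, symmetrize (fun a => M.X N a ω) f * starRingEnd ℂ (symmetrize (fun a => M.X N a ω) f)
        ∂(M.μ N)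
      = ((2 * k).factorial * #{τ : Equiv.Perm (Fin (2 * k)) | f ∘ τ = f} : ℕ)
          * ((∫ z, ‖z‖ ^ 2 ∂(M.ν N) : ℝ) : ℂ) := by
  have hcard := card_comp_symm_eq_comp_symm f
  rw [Fintype.card_fin] at hcard
  rw [← hcard]
  exact integral_sum_mul_conj_sum _ _ (M.memLp_X N) (M.integral_mul_conj N)
    fun σ : Equiv.Perm (Fin (2 * k)) => f ∘ σ.symm

lemma phi_S1_eq (η η' : Equiv.Perm (Fin k)) :
    Phi k N (M.μ N) (fun ω => S1 M N ω * Umat k N η * (S1 M N ω)ᴴ * (Umat k N η')ᴴ)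
      = (((Real.sqrt ((((2 * k).factorial * k.factorial : ℕ) : ℝ) * c))⁻¹ ^ 2 *
          (2 * k).factorial * (((N : ℝ) ^ k)⁻¹ *
            (∑ π : Equiv.Perm (Fin (2 * k)), (#{f : Fin (2 * k) → Fin N | f ∘ π = f} : ℝ)) *
            ∫ z, ‖z‖ ^ 2 ∂(M.ν N)) : ℝ) : ℂ) := by
  set β : ℝ := (Real.sqrt ((((2 * k).factorial * k.factorial : ℕ) : ℝ) * c))⁻¹
  have htrace : ∀ ω, (S1 M N ω * Umat k N η * (S1 M N ω)ᴴ * (Umat k N η')ᴴ).trace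
      = (β : ℂ) ^ 2 * ∑ f, symmetrize (fun a => M.X N a ω) f
          * starRingEnd ℂ (symmetrize (fun a => M.X N a ω) f) := fun ω => by
    simp only [S1, conjTranspose_smul, Complex.star_def, Complex.conj_ofReal, smul_mul_assoc,
      mul_smul_comm, trace_smul, smul_smul, smul_eq_mul, ← sq]
    exact congrArg _ (trace_sum_flatten_mul_Umat k N η η' _)
  simp only [Phi, htrace]
  rw [integral_const_mul, integral_const_mul, integral_finsetSum _ fun f _ => ?_]
  · simp_rw [M.integral_symmetrize_mul_conj N, ← sum_mul, Nat.cast_mul, ← mul_sum, ← Nat.cast_sum,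
      sum_card_comp_perm_eq_self_comm]
    push_cast
    ring
  · have hf : MemLp (fun ω => symmetrize (fun a => M.X N a ω) f) 2 (M.μ N) :=
      memLp_finsetSum _ fun σ _ => M.memLp_X N _
    exact hf.integrable_mul hf.star

lemma tendsto_inv_pow_mul_sum_card_mul_integral_norm_sq :
    Tendsto (fun N : ℕ => ((N : ℝ) ^ k)⁻¹ *
        (∑ π : Equiv.Perm (Fin (2 * k)), (#{f : Fin (2 * k) → Fin N | f ∘ π = f} : ℝ)) *
        ∫ z, ‖z‖ ^ 2 ∂(M.ν N)) atTop (nhds c) := by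
  have h := M.lim_abs_sq.mul (tendsto_sum_card_comp_perm_eq_self_div_pow (ι := Fin (2 * k)))
  rw [mul_one] at h
  refine h.congr' ?_
  filter_upwards [eventually_ge_atTop 1] with N hN
  have hN0 : (N : ℝ) ≠ 0 := by positivity
  rw [Fintype.card_fin]
  field_simp
  ring

end TensorModel

theorem covariance_S1_general (k : ℕ) (c : ℝ) (c' : ℂ) (M : TensorModel k c c')
    (η η' : Equiv.Perm (Fin k)) :
    Tendsto (fun N : ℕ =>
        Phi k N (M.μ N) (fun ω =>
          S1 M N ω * Umat k N η * (S1 M N ω)ᴴ * (Umat k N η')ᴴ))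
      atTop (nhds (1 / (k.factorial : ℂ))) := by
  have hlimit : (Real.sqrt ((((2 * k).factorial * k.factorial : ℕ) : ℝ) * c))⁻¹ ^ 2 *
      (2 * k).factorial * c = 1 / k.factorial := by
    have hc := M.c_pos
    rw [inv_pow, Real.sq_sqrt (by positivity)]
    push_cast
    field_simp
  simp_rw [M.phi_S1_eq]
  convert ((M.tendsto_inv_pow_mul_sum_card_mul_integral_norm_sq).const_mul _).ofReal using 2
  rw [hlimit]
  norm_num

/-- For a random tensor satisfying Hypothesis (TensorModel) with parameter
`(c, c')`, for all `η, η' ∈ S_k`, `Φ_N(S_{1,N}·U_{N,η}·S_{1,N}^*·U_{N,η'}^*)` converges to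
`1/k!` as `N → ∞` (in particular the limit does not depend on `η` or `η'`). -/
theorem covariance_S1 (k : ℕ) (hk : 1 ≤ k) (c : ℝ) (c' : ℂ) (M : TensorModel k c c')
    (η η' : Equiv.Perm (Fin k)) :
    Tendsto (fun N : ℕ =>
        Phi k N (M.μ N) (fun ω =>
          S1 M N ω * Umat k N η * (S1 M N ω)ᴴ * (Umat k N η')ᴴ))
      atTop (nhds (1 / (k.factorial : ℂ))) :=
  covariance_S1_general k c c' M η η'
end
end

section
/- Fix integers k ≥ 1 and L ≥ 1, and let V = {1,…,k} × {1,…,L} with the convention that the second coordinate is taken cyclically (i.e., L+1 is identified with 1). Let π be any partition of V, and for v ∈ V write [v]_π for the block of π containing v. For each ℓ ∈ {1,…,L}, define the skeleton hyperedge ē_ℓ := { [(i, ℓ)]_π : i ∈ {1,…,k} } ∪ { [(i, ℓ+1)]_π : i ∈ {1,…,k} }, a set of blocks of π. Then the number of blocks of π satisfies |π| ≤ k + k·|{ē_ℓ : ℓ ∈ {1,…,L}}|, i.e., −k − k·(number of distinct skeleton hyperedges) + (number of blocks of π) ≤ 0. -/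
/-!
Walk along the columns `0, 1, …, L - 1`. The first column meets at most `k` blocks. Column
`j + 1` can meet a block not met before only if the skeleton hyperedge `ē_j` is new: if
`ē_j = ē_{j'}` with `j' < j`, then column `j + 1` lies in `ē_{j'}`, which is covered by columns
`j'` and `j' + 1 ≤ j`. So each distinct hyperedge accounts for at most `k` new blocks.
-/

open Finset

theorem card_biUnion_range_succ_le_of_card_le {α : Type*} [DecidableEq α] {C : ℕ → Finset α}
    {k : ℕ} (hC : ∀ j, #(C j) ≤ k) (n : ℕ) :
    #((range (n + 1)).biUnion C) ≤ k + k * #((range n).image fun j => C j ∪ C (j + 1)) := by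
  induction n with
  | zero => simpa using hC 0
  | succ n ih =>
    have himage : (range (n + 1)).image (fun j => C j ∪ C (j + 1)) =
        insert (C n ∪ C (n + 1)) ((range n).image fun j => C j ∪ C (j + 1)) := by
      rw [range_add_one, image_insert]
    rw [range_add_one (n := n + 1), biUnion_insert, himage]
    by_cases hrep : C n ∪ C (n + 1) ∈ (range n).image fun j => C j ∪ C (j + 1)
    · obtain ⟨j, hj, hjn⟩ := mem_image.mp hrep
      have hsub : C (n + 1) ⊆ (range (n + 1)).biUnion C := by
        refine subset_union_right.trans (hjn ▸ union_subset ?_ ?_) <;>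
          exact subset_biUnion_of_mem C (by simp at hj ⊢; omega)
      rwa [union_eq_right.mpr hsub, insert_eq_self.mpr hrep]
    · calc #(C (n + 1) ∪ (range (n + 1)).biUnion C)
          ≤ #(C (n + 1)) + #((range (n + 1)).biUnion C) := card_union_le _ _
        _ ≤ k + (k + k * #((range n).image fun j => C j ∪ C (j + 1))) := add_le_add (hC _) ih
        _ = k + k * #(insert (C n ∪ C (n + 1)) ((range n).image fun j => C j ∪ C (j + 1))) := by
          rw [card_insert_of_notMem hrep]; ring

section Columns

open Fin.NatCast

variable {k L : ℕ} [NeZero L] (π : Setoid (Fin k × Fin L)) [DecidableEq (Quotient π)]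

/-- The blocks met by column `j mod L`. -/
def column (j : ℕ) : Finset (Quotient π) :=
  univ.image fun i => Quotient.mk π (i, (j : Fin L))

theorem mem_biUnion_range_column (q : Quotient π) : q ∈ (range L).biUnion (column π) := by
  obtain ⟨⟨i, ℓ⟩, rfl⟩ := Quotient.exists_rep q
  exact mem_biUnion.mpr ⟨ℓ, mem_range.mpr ℓ.isLt,
    mem_image.mpr ⟨i, mem_univ _, by rw [Fin.cast_val_eq_self]⟩⟩

theorem coe_column_union_column_succ (j : ℕ) :
    ((column π j ∪ column π (j + 1) : Finset (Quotient π)) : Set (Quotient π)) =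
      (Set.range fun i : Fin k => Quotient.mk π (i, (j : Fin L))) ∪
        Set.range fun i : Fin k => Quotient.mk π (i, (j : Fin L) + 1) := by
  simp [column, Set.image_univ]

end Columns

theorem card_blocks_le_skeleton_bound_general (k L : ℕ) [NeZero L]
    (π : Setoid (Fin k × Fin L)) :
    Nat.card (Quotient π) ≤
      k + k * Set.ncard (Set.range (fun ℓ : Fin L =>
        (Set.range fun i : Fin k => Quotient.mk π (i, ℓ)) ∪
          (Set.range fun i : Fin k => Quotient.mk π (i, ℓ + 1)))) := by
  classical
  set edges := (range (L - 1)).image fun j => column π j ∪ column π (j + 1)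
  have hcolumn : ∀ j, #(column π j) ≤ k := fun j => card_image_le.trans (by simp)
  have hblocks : Nat.card (Quotient π) ≤ k + k * #edges := by
    have hcover : univ ⊆ (range (L - 1 + 1)).biUnion (column π) := fun q _ => by
      simpa [Nat.sub_add_cancel NeZero.one_le] using mem_biUnion_range_column π q
    rw [Nat.card_eq_fintype_card, ← card_univ]
    exact (card_le_card hcover).trans (card_biUnion_range_succ_le_of_card_le hcolumn _)
  have hedges : #edges ≤ Set.ncard (Set.range (fun ℓ : Fin L =>
      (Set.range fun i : Fin k => Quotient.mk π (i, ℓ)) ∪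
        (Set.range fun i : Fin k => Quotient.mk π (i, ℓ + 1)))) := by
    rw [← Set.ncard_coe_finset, ← Set.ncard_image_of_injective _ Finset.coe_injective]
    refine Set.ncard_le_ncard ?_ (Set.finite_range _)
    rintro _ ⟨_, hmem, rfl⟩
    obtain ⟨j, -, rfl⟩ := mem_image.mp hmem
    exact ⟨Fin.ofNat L j, (coe_column_union_column_succ π j).symm⟩
  exact hblocks.trans (by gcongr)

/-- Let `V = {1,…,k} × {1,…,L}` (with the second coordinate cyclic) and
let `π` be any partition of `V` (encoded as a setoid, whose blocks are the equivalence
classes).  For `ℓ ∈ {1,…,L}`, the skeleton hyperedge `ē_ℓ` is the set of blocks meeting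
column `ℓ` or column `ℓ+1`.  Then the number of blocks of `π` is at most
`k + k·(number of distinct skeleton hyperedges)`. -/
theorem card_blocks_le_skeleton_bound (k L : ℕ) (hk : 1 ≤ k) [NeZero L]
    (π : Setoid (Fin k × Fin L)) :
    Nat.card (Quotient π) ≤
      k + k * Set.ncard (Set.range (fun ℓ : Fin L =>
        (Set.range fun i : Fin k => Quotient.mk π (i, ℓ)) ∪
          (Set.range fun i : Fin k => Quotient.mk π (i, ℓ + 1)))) :=
  card_blocks_le_skeleton_bound_general k L π
end
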